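/- Let P ∈ ℝ^{n×N} with ‖P‖₂ = 1, let W* ∈ ℝ^{n×n} be unitary, and let Z* := W*P satisfy Z* Z*ᵀ = Id. There exists a constant C > 0 such that the following holds: for every Z ∈ ℝ^{n×N} such that (i) for each k the support of the k-th row of Z − Z* is contained in the support of the k-th row of Z*, and (ii) ‖Z − Z*‖₂ ≤ 1/2, the matrix P Zᵀ is invertible, and the orthogonal matrix W := V Uᵀ obtained from any full SVD P Zᵀ = U Σ Vᵀ satisfies ‖W − W*‖_F ≤ q ‖Z − Z*‖_F + C ‖Z − Z*‖_F², where q := max_{1≤k≤n} ‖D_k Z* D̃_k‖₂. -/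

import Mathlib

open scoped BigOperators
open Matrix

/-- Frobenius norm of a real matrix. -/
noncomputable def frobNorm {m n : ℕ} (A : Matrix (Fin m) (Fin n) ℝ) : ℝ :=
  Real.sqrt (∑ i, ∑ j, (A i j) ^ 2)

/-- Spectral (largest singular value / ℓ2-operator) norm of a real matrix. -/
noncomputable def specNorm {m n : ℕ} (A : Matrix (Fin m) (Fin n) ℝ) : ℝ :=
  ‖LinearMap.toContinuousLinearMap (Matrix.toEuclideanLin A)‖

/-- Euclidean (ℓ2) norm of a vector. -/
noncomputable def vecNorm {n : ℕ} (v : Fin n → ℝ) : ℝ :=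
  Real.sqrt (∑ i, v i ^ 2)

/-- β(z): the smallest nonzero magnitude among the entries of `z`
(defined as `sInf` of the set of nonzero magnitudes; `0` if `z = 0`). -/
noncomputable def beta {n : ℕ} (z : Fin n → ℝ) : ℝ :=
  sInf {r : ℝ | ∃ i, z i ≠ 0 ∧ r = |z i|}

/-- `z` is an output of the hard-thresholding operator `H_s` applied to `y`:
there is a set `T` of `min s n` indices carrying largest-magnitude entries of `y`,
such that `z` agrees with `y` on `T` and vanishes off `T`. -/
def IsHardThreshold {n : ℕ} (s : ℕ) (y z : Fin n → ℝ) : Prop :=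
  ∃ T : Finset (Fin n), T.card = min s n ∧ (∀ i ∈ T, z i = y i) ∧ (∀ i ∉ T, z i = 0) ∧
    ∀ i ∈ T, ∀ j ∉ T, |y j| ≤ |y i|

/-- `A = U * S * Vᵀ` is a full singular value decomposition of `A`:
`U, V` orthogonal and `S` diagonal with nonnegative entries. -/
def IsFullSVD {n : ℕ} (A U S V : Matrix (Fin n) (Fin n) ℝ) : Prop :=
  Uᵀ * U = 1 ∧ Vᵀ * V = 1 ∧ (∀ i j, i ≠ j → S i j = 0) ∧ (∀ i, 0 ≤ S i i) ∧ A = U * S * Vᵀ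

/-- `W = V * Uᵀ` for some full SVD `A = U * S * Vᵀ`. -/
def IsPolarFromSVD {n : ℕ} (A W : Matrix (Fin n) (Fin n) ℝ) : Prop :=
  ∃ U S V, IsFullSVD A U S V ∧ W = V * Uᵀ

/-- `D_k`: the n×n diagonal matrix of ones with a zero at entry (k,k). -/
noncomputable def Dmat {n : ℕ} (k : Fin n) : Matrix (Fin n) (Fin n) ℝ :=
  Matrix.diagonal (fun i => if i = k then 0 else 1)

-- `D̃_k`: the N×N diagonal matrix with ones at the support of the k-th row of `Zs`.
open Classical in
noncomputable def Dtil {n N : ℕ} (Zs : Matrix (Fin n) (Fin N) ℝ) (k : Fin n) :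
    Matrix (Fin N) (Fin N) ℝ :=
  Matrix.diagonal (fun i => if Zs k i ≠ 0 then 1 else 0)

/-- `q = max_{1 ≤ k ≤ n} ‖D_k Z* D̃_k‖₂`. -/
noncomputable def qZero {n N : ℕ} (Zs : Matrix (Fin n) (Fin N) ℝ) : ℝ :=
  ⨆ k, specNorm (Dmat k * Zs * Dtil Zs k)

/-- Smallest singular value of an n×N matrix: `min_{‖x‖=1, x ∈ ℝⁿ} ‖Aᵀ x‖`. -/
noncomputable def sigmaMin {n N : ℕ} (A : Matrix (Fin n) (Fin N) ℝ) : ℝ :=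
  sInf {r : ℝ | ∃ x : EuclideanSpace ℝ (Fin n), ‖x‖ = 1 ∧ r = ‖Matrix.toEuclideanLin Aᵀ x‖}

/-- Condition number κ(A): ratio of largest to smallest singular value. -/
noncomputable def condNumber {n N : ℕ} (A : Matrix (Fin n) (Fin N) ℝ) : ℝ :=
  specNorm A / sigmaMin A

/-- `q = κ⁴(Z*) · max_{1 ≤ k ≤ n} ‖D_k Z* Z*ᵀ Z* D̃_k‖₂`. -/
noncomputable def qGen {n N : ℕ} (Zs : Matrix (Fin n) (Fin N) ℝ) : ℝ :=
  condNumber Zs ^ 4 * ⨆ k, specNorm (Dmat k * Zs * Zsᵀ * Zs * Dtil Zs k)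

/-! Write `Z = Z* + E` and `M = E Z*ᵀ`. Since `P = W*ᵀ Z*` and `Z* Z*ᵀ = 1`, we get
`Z Pᵀ = (1 + M) W*`, so `W W*ᵀ` is the orthogonal factor `Q` of the polar decomposition
`1 + M = Q H`; and `1 + M` is invertible because `‖M‖₂ ≤ ‖E‖₂ ≤ 1/2`.

Each singular value `sᵢ` of `1 + M`, with right singular vector `oᵢ`, satisfies
`|sᵢ - 1| ≤ ‖M oᵢ‖`, whence `‖H - 1‖_F ≤ ‖M‖_F` and `‖Q - 1‖_F ≤ 2 ‖M‖_F`. With `X = Q - 1`, orthogonality of `Q` and symmetry of `H` give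
`2X = (M - Mᵀ) + Xᵀ M - Mᵀ X - Xᵀ X`, so `‖X‖_F ≤ ‖M - Mᵀ‖_F / 2 + 4 ‖M‖_F²`.
Finally, as each row of `E` is supported where the corresponding row of `Z*` is, the
off-diagonal part of `M` has `k`-th row `D_k Z* D̃_k E_k`, so `‖M - Mᵀ‖_F ≤ 2 q ‖E‖_F`.
-/

section Spectral

open scoped Matrix.Norms.L2Operator

variable {m n p : ℕ}

lemma specNorm_eq_l2_opNorm (A : Matrix (Fin m) (Fin n) ℝ) : specNorm A = ‖A‖ := rfl

lemma specNorm_nonneg (A : Matrix (Fin m) (Fin n) ℝ) : 0 ≤ specNorm A := norm_nonneg A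

lemma specNorm_transpose (A : Matrix (Fin m) (Fin n) ℝ) : specNorm Aᵀ = specNorm A := by
  simp only [specNorm_eq_l2_opNorm, ← conjTranspose_eq_transpose_of_trivial,
    l2_opNorm_conjTranspose]

lemma specNorm_mul_le (A : Matrix (Fin m) (Fin n) ℝ) (B : Matrix (Fin n) (Fin p) ℝ) :
    specNorm (A * B) ≤ specNorm A * specNorm B :=
  l2_opNorm_mul A B

lemma specNorm_le_one_of_transpose_mul_self {A : Matrix (Fin m) (Fin n) ℝ} (hA : Aᵀ * A = 1) :
    specNorm A ≤ 1 := by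
  have h : specNorm A * specNorm A ≤ 1 := by
    rw [specNorm_eq_l2_opNorm, ← l2_opNorm_conjTranspose_mul_self,
      conjTranspose_eq_transpose_of_trivial, hA, ← diagonal_one, l2_opNorm_diagonal]
    exact pi_norm_le_iff_of_nonneg zero_le_one |>.2 fun _ => by simp
  nlinarith [specNorm_nonneg A]

lemma norm_mulVec_le_specNorm (A : Matrix (Fin m) (Fin n) ℝ) (x : Fin n → ℝ) :
    ‖WithLp.toLp 2 (A *ᵥ x)‖ ≤ specNorm A * ‖WithLp.toLp 2 x‖ :=
  l2_opNorm_mulVec A (WithLp.toLp 2 x)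

lemma isUnit_one_add_of_specNorm_lt_one {M : Matrix (Fin n) (Fin n) ℝ} (hM : specNorm M < 1) :
    IsUnit (1 + M) := by
  simpa using isUnit_one_sub_of_norm_lt_one (x := -M) (by rwa [norm_neg])

end Spectral

open scoped Matrix.Norms.Frobenius

section Frobenius

variable {m n p : ℕ}

lemma frobNorm_eq_norm (A : Matrix (Fin m) (Fin n) ℝ) : frobNorm A = ‖A‖ := by
  simp [frobNorm, frobenius_norm_def, Real.sqrt_eq_rpow]

lemma frobenius_norm_sq_eq_sum_rows (A : Matrix (Fin m) (Fin n) ℝ) :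
    ‖A‖ ^ 2 = ∑ i, ‖WithLp.toLp 2 (A i)‖ ^ 2 :=
  PiLp.norm_sq_eq_of_L2 _ (WithLp.toLp 2 fun i => WithLp.toLp 2 (A i))

lemma frobenius_norm_le_of_rows {A : Matrix (Fin m) (Fin n) ℝ} {B : Matrix (Fin m) (Fin p) ℝ}
    {c : ℝ} (hc : 0 ≤ c)
    (h : ∀ i, ‖WithLp.toLp 2 (B i)‖ ≤ c * ‖WithLp.toLp 2 (A i)‖) :
    ‖B‖ ≤ c * ‖A‖ := by
  refine le_of_sq_le_sq ?_ (by positivity)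
  rw [mul_pow, frobenius_norm_sq_eq_sum_rows, frobenius_norm_sq_eq_sum_rows, Finset.mul_sum]
  gcongr with i
  rw [← mul_pow]
  gcongr
  exact h i

lemma frobenius_norm_mul_le_mul_specNorm (A : Matrix (Fin m) (Fin n) ℝ)
    (B : Matrix (Fin n) (Fin p) ℝ) : ‖A * B‖ ≤ ‖A‖ * specNorm B := by
  rw [mul_comm]
  refine frobenius_norm_le_of_rows (specNorm_nonneg B) fun i => ?_
  rw [← specNorm_transpose, mul_apply_eq_vecMul, ← mulVec_transpose]
  exact norm_mulVec_le_specNorm Bᵀ (A i)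

lemma frobenius_norm_mul_le_specNorm_mul (A : Matrix (Fin m) (Fin n) ℝ)
    (B : Matrix (Fin n) (Fin p) ℝ) : ‖A * B‖ ≤ specNorm A * ‖B‖ := by
  rw [← frobenius_norm_transpose, transpose_mul, ← specNorm_transpose, mul_comm,
    ← frobenius_norm_transpose B]
  exact frobenius_norm_mul_le_mul_specNorm Bᵀ Aᵀ

lemma frobenius_norm_mul_of_transpose_mul_self {Q : Matrix (Fin m) (Fin n) ℝ} (hQ : Qᵀ * Q = 1)
    (A : Matrix (Fin n) (Fin p) ℝ) : ‖Q * A‖ = ‖A‖ := by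
  have hQ₁ : specNorm Q ≤ 1 := specNorm_le_one_of_transpose_mul_self hQ
  refine le_antisymm ?_ ?_
  · calc ‖Q * A‖ ≤ specNorm Q * ‖A‖ := frobenius_norm_mul_le_specNorm_mul Q A
      _ ≤ ‖A‖ := mul_le_of_le_one_left (norm_nonneg A) hQ₁
  · calc ‖A‖ = ‖Qᵀ * (Q * A)‖ := by rw [← Matrix.mul_assoc, hQ, Matrix.one_mul]
      _ ≤ specNorm Qᵀ * ‖Q * A‖ := frobenius_norm_mul_le_specNorm_mul _ _
      _ ≤ ‖Q * A‖ := by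
        rw [specNorm_transpose]; exact mul_le_of_le_one_left (norm_nonneg _) hQ₁

lemma frobenius_norm_mul_of_mul_transpose_self {Q : Matrix (Fin n) (Fin p) ℝ} (hQ : Q * Qᵀ = 1)
    (A : Matrix (Fin m) (Fin n) ℝ) : ‖A * Q‖ = ‖A‖ := by
  rw [← frobenius_norm_transpose, transpose_mul, ← frobenius_norm_transpose A]
  exact frobenius_norm_mul_of_transpose_mul_self (by rwa [transpose_transpose]) Aᵀ

end Frobenius

section Polar

variable {n : ℕ}

lemma transpose_mul_self_mul_eq_one {m p : ℕ} {A : Matrix (Fin m) (Fin n) ℝ}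
    {B : Matrix (Fin n) (Fin p) ℝ} (hA : Aᵀ * A = 1) (hB : Bᵀ * B = 1) :
    (A * B)ᵀ * (A * B) = 1 := by
  rw [transpose_mul, Matrix.mul_assoc, ← Matrix.mul_assoc Aᵀ, hA, Matrix.one_mul, hB]

lemma norm_col_eq_one_of_transpose_mul_self {m : ℕ} {C : Matrix (Fin m) (Fin n) ℝ}
    (hC : Cᵀ * C = 1) (i : Fin n) : ‖WithLp.toLp 2 (Cᵀ i)‖ = 1 := by
  have h := congrFun (congrFun hC i) i
  simp only [mul_apply, transpose_apply, one_apply_eq, ← sq] at h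
  simp [EuclideanSpace.norm_eq, h]

lemma frobenius_norm_diagonal_sub_one_le {m : ℕ} {B C O : Matrix (Fin m) (Fin n) ℝ}
    {d : Fin n → ℝ} (hd : 0 ≤ d) (hC : Cᵀ * C = 1) (hO : Oᵀ * O = 1)
    (hB : B = C * diagonal d) :
    ‖diagonal d - 1‖ ≤ ‖B - O‖ := by
  have hcol : ∀ i, |d i - 1| ≤ ‖WithLp.toLp 2 ((B - O)ᵀ i)‖ := by
    intro i
    have hBcol : Bᵀ i = d i • Cᵀ i := by
      ext k; simp [hB, mul_diagonal, mul_comm]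
    have hBnorm : ‖WithLp.toLp 2 (Bᵀ i)‖ = d i := by
      rw [hBcol, WithLp.toLp_smul, norm_smul, norm_col_eq_one_of_transpose_mul_self hC,
        Real.norm_of_nonneg (hd i), mul_one]
    rw [← hBnorm, ← norm_col_eq_one_of_transpose_mul_self hO i, transpose_sub]
    exact abs_norm_sub_norm_le _ _
  rw [← diagonal_one, diagonal_sub, frobenius_norm_diagonal, ← frobenius_norm_transpose (B - O)]
  refine le_of_sq_le_sq ?_ (norm_nonneg _)
  rw [PiLp.norm_sq_eq_of_L2, frobenius_norm_sq_eq_sum_rows]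
  gcongr with i
  exact hcol i

variable {Q O M : Matrix (Fin n) (Fin n) ℝ} {d : Fin n → ℝ}

lemma frobenius_norm_positive_factor_sub_one_le (hd : 0 ≤ d) (hQ : Qᵀ * Q = 1)
    (hO : Oᵀ * O = 1) (hpolar : 1 + M = Q * (O * diagonal d * Oᵀ)) :
    ‖O * diagonal d * Oᵀ - 1‖ ≤ ‖M‖ := by
  have hO' : O * Oᵀ = 1 := mul_eq_one_comm.mp hO
  have hMO : (1 + M) * O = Q * O * diagonal d := by
    rw [hpolar]; simp only [Matrix.mul_assoc, hO, Matrix.mul_one]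
  have h := frobenius_norm_diagonal_sub_one_le hd (transpose_mul_self_mul_eq_one hQ hO) hO hMO
  rw [Matrix.add_mul, Matrix.one_mul, add_sub_cancel_left,
    frobenius_norm_mul_of_mul_transpose_self hO'] at h
  have hconj : O * diagonal d * Oᵀ - 1 = O * (diagonal d - 1) * Oᵀ := by
    rw [Matrix.mul_sub, Matrix.sub_mul, Matrix.mul_one, hO']
  rwa [hconj, frobenius_norm_mul_of_mul_transpose_self (by rwa [transpose_transpose]),
    frobenius_norm_mul_of_transpose_mul_self hO]

lemma frobenius_norm_orthogonal_factor_sub_one_le (hd : 0 ≤ d) (hQ : Qᵀ * Q = 1)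
    (hO : Oᵀ * O = 1) (hpolar : 1 + M = Q * (O * diagonal d * Oᵀ)) :
    ‖Q - 1‖ ≤ ‖M - Mᵀ‖ / 2 + 4 * ‖M‖ ^ 2 := by
  set H := O * diagonal d * Oᵀ with hH_def
  set X := Q - 1 with hX_def
  have hX : ‖X‖ ≤ 2 * ‖M‖ := by
    have h : X = M - Q * (H - 1) := by
      rw [Matrix.mul_sub, ← hpolar, Matrix.mul_one, hX_def]; abel
    calc ‖X‖ ≤ ‖M‖ + ‖Q * (H - 1)‖ := h ▸ norm_sub_le _ _
      _ ≤ 2 * ‖M‖ := by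
        rw [frobenius_norm_mul_of_transpose_mul_self hQ]
        linarith [frobenius_norm_positive_factor_sub_one_le hd hQ hO hpolar]
  have hsym : (1 + M)ᵀ * Q = Qᵀ * (1 + M) := by
    have hHt : Hᵀ = H := by
      rw [hH_def, transpose_mul, transpose_mul, transpose_transpose, diagonal_transpose,
        Matrix.mul_assoc]
    rw [hpolar, transpose_mul, hHt, Matrix.mul_assoc, hQ, ← Matrix.mul_assoc, hQ,
      Matrix.one_mul, Matrix.mul_one]
  have hid : X + X = (M - Mᵀ) + (Xᵀ * M - Mᵀ * X) - Xᵀ * X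
      + ((1 + M)ᵀ * Q - Qᵀ * (1 + M)) + (Qᵀ * Q - 1) := by
    simp only [hX_def, transpose_sub, transpose_add, transpose_one]; noncomm_ring
  rw [hsym, hQ, sub_self, sub_self, add_zero, add_zero] at hid
  have h2X : 2 * ‖X‖ ≤ ‖M - Mᵀ‖ + 2 * ‖X‖ * ‖M‖ + ‖X‖ * ‖X‖ := by
    calc 2 * ‖X‖ = ‖X + X‖ := by rw [← two_smul ℝ X, norm_smul, Real.norm_two]
      _ ≤ ‖M - Mᵀ‖ + (‖Xᵀ * M‖ + ‖Mᵀ * X‖) + ‖Xᵀ * X‖ := by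
        rw [hid]
        refine (norm_sub_le _ _).trans ?_
        gcongr
        exact (norm_add_le _ _).trans (by gcongr; exact norm_sub_le _ _)
      _ ≤ ‖M - Mᵀ‖ + (‖X‖ * ‖M‖ + ‖M‖ * ‖X‖) + ‖X‖ * ‖X‖ := by
        gcongr <;> grw [frobenius_norm_mul, frobenius_norm_transpose]
      _ = ‖M - Mᵀ‖ + 2 * ‖X‖ * ‖M‖ + ‖X‖ * ‖X‖ := by ring
  nlinarith [norm_nonneg X, norm_nonneg M]

lemma IsFullSVD.transpose_eq_polar {A U S V : Matrix (Fin n) (Fin n) ℝ}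
    (h : IsFullSVD A U S V) : Aᵀ = V * Uᵀ * (U * diagonal (fun i => S i i) * Uᵀ) := by
  obtain ⟨hU, -, hoff, -, rfl⟩ := h
  have hS : S = diagonal (fun i => S i i) := by
    ext i j
    by_cases hij : i = j
    · simp [hij]
    · simp [hij, hoff i j hij]
  conv_lhs => rw [hS, transpose_mul, transpose_mul, transpose_transpose, diagonal_transpose]
  simp only [Matrix.mul_assoc]
  rw [← Matrix.mul_assoc Uᵀ U, hU, Matrix.one_mul]

lemma frobenius_norm_polar_sub_le_of_isFullSVD {A U S V W : Matrix (Fin n) (Fin n) ℝ}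
    (hW : Wᵀ * W = 1) (hA : Aᵀ = (1 + M) * W) (h : IsFullSVD A U S V) :
    ‖V * Uᵀ - W‖ ≤ ‖M - Mᵀ‖ / 2 + 4 * ‖M‖ ^ 2 := by
  have hW' : W * Wᵀ = 1 := mul_eq_one_comm.mp hW
  have hpolar : 1 + M = V * Uᵀ * Wᵀ * (W * U * diagonal (fun i => S i i) * (W * U)ᵀ) := by
    rw [show 1 + M = Aᵀ * Wᵀ by rw [hA, Matrix.mul_assoc, hW', Matrix.mul_one],
      h.transpose_eq_polar, transpose_mul]
    simp only [Matrix.mul_assoc]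
    rw [← Matrix.mul_assoc Wᵀ W, hW, Matrix.one_mul]
  have hQ : (V * Uᵀ * Wᵀ)ᵀ * (V * Uᵀ * Wᵀ) = 1 :=
    transpose_mul_self_mul_eq_one (transpose_mul_self_mul_eq_one h.2.1
      (by rw [transpose_transpose]; exact mul_eq_one_comm.mp h.1))
      (by rwa [transpose_transpose])
  have hdiff : V * Uᵀ - W = (V * Uᵀ * Wᵀ - 1) * W := by
    rw [Matrix.sub_mul, Matrix.mul_assoc, hW, Matrix.mul_one, Matrix.one_mul]
  rw [hdiff, frobenius_norm_mul_of_mul_transpose_self hW']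
  exact frobenius_norm_orthogonal_factor_sub_one_le (fun i => h.2.2.2.1 i) hQ
    (transpose_mul_self_mul_eq_one hW h.1) hpolar

end Polar

section Support

variable {n N : ℕ}

lemma Dmat_mulVec_apply (k : Fin n) (w : Fin n → ℝ) (l : Fin n) :
    (Dmat k *ᵥ w) l = if l = k then 0 else w l := by
  simp [Dmat, mulVec_diagonal, ite_mul]

lemma Dtil_mulVec_of_support (Zs : Matrix (Fin n) (Fin N) ℝ) (k : Fin n) {x : Fin N → ℝ}
    (hx : ∀ i, x i ≠ 0 → Zs k i ≠ 0) : Dtil Zs k *ᵥ x = x := by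
  ext i
  by_cases hi : Zs k i = 0
  · have hxi : x i = 0 := by_contra fun h => hx i h hi
    simp [Dtil, mulVec_diagonal, hi, hxi]
  · simp [Dtil, mulVec_diagonal, hi]

lemma specNorm_le_qZero (Zs : Matrix (Fin n) (Fin N) ℝ) (k : Fin n) :
    specNorm (Dmat k * Zs * Dtil Zs k) ≤ qZero Zs :=
  le_ciSup (f := fun k => specNorm (Dmat k * Zs * Dtil Zs k)) (Set.finite_range _).bddAbove k

lemma qZero_nonneg (Zs : Matrix (Fin n) (Fin N) ℝ) : 0 ≤ qZero Zs :=
  Real.iSup_nonneg fun _ => specNorm_nonneg _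

lemma frobenius_norm_sub_transpose_le_qZero {Zs E : Matrix (Fin n) (Fin N) ℝ}
    (hE : ∀ k i, E k i ≠ 0 → Zs k i ≠ 0) :
    ‖E * Zsᵀ - (E * Zsᵀ)ᵀ‖ ≤ 2 * qZero Zs * ‖E‖ := by
  set V : Matrix (Fin n) (Fin n) ℝ := of fun k => (Dmat k * Zs * Dtil Zs k) *ᵥ E k
  have hV : ∀ k l, V k l = if l = k then 0 else (E * Zsᵀ) k l := by
    intro k l
    simp only [V, of_apply, ← mulVec_mulVec, Dtil_mulVec_of_support Zs k (hE k),
      Dmat_mulVec_apply]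
    simp [mulVec, dotProduct, mul_apply, mul_comm]
  have hskew : E * Zsᵀ - (E * Zsᵀ)ᵀ = V - Vᵀ := by
    ext k l
    simp only [Matrix.sub_apply, transpose_apply, hV]
    by_cases hlk : l = k
    · simp [hlk]
    · simp [hlk, Ne.symm hlk]
  have hVnorm : ‖V‖ ≤ qZero Zs * ‖E‖ :=
    frobenius_norm_le_of_rows (qZero_nonneg Zs) fun k =>
      (norm_mulVec_le_specNorm _ _).trans
        (mul_le_mul_of_nonneg_right (specNorm_le_qZero Zs k) (norm_nonneg _))
  calc ‖E * Zsᵀ - (E * Zsᵀ)ᵀ‖ ≤ ‖V‖ + ‖Vᵀ‖ := hskew ▸ norm_sub_le V Vᵀ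
    _ ≤ 2 * qZero Zs * ‖E‖ := by rw [frobenius_norm_transpose]; linarith

end Support

lemma mul_transpose_eq_one_add_mul {n N : ℕ} {P Z Zs : Matrix (Fin n) (Fin N) ℝ}
    {Ws : Matrix (Fin n) (Fin n) ℝ} (hWs : Wsᵀ * Ws = 1) (hZs : Zs = Ws * P)
    (hZZ : Zs * Zsᵀ = 1) : Z * Pᵀ = (1 + (Z - Zs) * Zsᵀ) * Ws := by
  have hPt : Zsᵀ * Ws = Pᵀ := by
    rw [hZs, transpose_mul, Matrix.mul_assoc, hWs, Matrix.mul_one]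
  rw [← hPt, ← Matrix.mul_assoc, ← hZZ, ← Matrix.add_mul, add_sub_cancel]

theorem stmt12_general
    {n N : ℕ} (P : Matrix (Fin n) (Fin N) ℝ) (Ws : Matrix (Fin n) (Fin n) ℝ)
    (Zs : Matrix (Fin n) (Fin N) ℝ)
    (hWs : Wsᵀ * Ws = 1)
    (hZs : Zs = Ws * P) (hZZ : Zs * Zsᵀ = 1) :
    ∃ C : ℝ, 0 < C ∧ ∀ Z : Matrix (Fin n) (Fin N) ℝ,
      (∀ k i, (Z - Zs) k i ≠ 0 → Zs k i ≠ 0) →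
      specNorm (Z - Zs) ≤ 1/2 →
      IsUnit (P * Zᵀ) ∧
      ∀ U S V : Matrix (Fin n) (Fin n) ℝ, IsFullSVD (P * Zᵀ) U S V →
        frobNorm (V * Uᵀ - Ws) ≤
          qZero Zs * frobNorm (Z - Zs) + C * frobNorm (Z - Zs) ^ 2 := by
  refine ⟨4, by norm_num, fun Z hsupp hspec => ?_⟩
  set E := Z - Zs
  set M := E * Zsᵀ
  have hZP : Z * Pᵀ = (1 + M) * Ws := mul_transpose_eq_one_add_mul hWs hZs hZZ
  have hZsT : specNorm Zsᵀ ≤ 1 :=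
    specNorm_le_one_of_transpose_mul_self (by rwa [transpose_transpose])
  have hunit : IsUnit (P * Zᵀ) := by
    rw [← isUnit_transpose, transpose_mul, transpose_transpose, hZP]
    refine (isUnit_one_add_of_specNorm_lt_one ?_).mul (IsUnit.of_mul_eq_one_right _ hWs)
    calc specNorm M ≤ specNorm E * specNorm Zsᵀ := specNorm_mul_le E Zsᵀ
      _ ≤ 1 / 2 * 1 := mul_le_mul hspec hZsT (specNorm_nonneg _) (by norm_num)
      _ < 1 := by norm_num
  refine ⟨hunit, fun U S V hsvd => ?_⟩
  have hskew : ‖M - Mᵀ‖ ≤ 2 * qZero Zs * ‖E‖ :=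
    frobenius_norm_sub_transpose_le_qZero hsupp
  have hM : ‖M‖ ≤ ‖E‖ :=
    (frobenius_norm_mul_le_mul_specNorm E Zsᵀ).trans (mul_le_of_le_one_right (norm_nonneg E) hZsT)
  rw [frobNorm_eq_norm, frobNorm_eq_norm]
  calc ‖V * Uᵀ - Ws‖ ≤ ‖M - Mᵀ‖ / 2 + 4 * ‖M‖ ^ 2 :=
        frobenius_norm_polar_sub_le_of_isFullSVD hWs
          (by rw [transpose_mul, transpose_transpose, hZP]) hsvd
    _ ≤ qZero Zs * ‖E‖ + 4 * ‖E‖ ^ 2 := by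
        gcongr ?_ + 4 * ?_ ^ 2
        linarith

/-- one operator-update step contracts the error:
`‖W − W*‖_F ≤ q ‖Z − Z*‖_F + C ‖Z − Z*‖_F²` with `q = max_k ‖D_k Z* D̃_k‖₂`. -/
theorem stmt12
    {n N : ℕ} (P : Matrix (Fin n) (Fin N) ℝ) (Ws : Matrix (Fin n) (Fin n) ℝ)
    (Zs : Matrix (Fin n) (Fin N) ℝ)
    (hP : specNorm P = 1) (hWs : Wsᵀ * Ws = 1)
    (hZs : Zs = Ws * P) (hZZ : Zs * Zsᵀ = 1) :
    ∃ C : ℝ, 0 < C ∧ ∀ Z : Matrix (Fin n) (Fin N) ℝ,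
      (∀ k i, (Z - Zs) k i ≠ 0 → Zs k i ≠ 0) →
      specNorm (Z - Zs) ≤ 1/2 →
      IsUnit (P * Zᵀ) ∧
      ∀ U S V : Matrix (Fin n) (Fin n) ℝ, IsFullSVD (P * Zᵀ) U S V →
        frobNorm (V * Uᵀ - Ws) ≤
          qZero Zs * frobNorm (Z - Zs) + C * frobNorm (Z - Zs) ^ 2 :=
  stmt12_general P Ws Zs hWs hZs hZZ
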